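/- Let V be the maximum of two distinct affine functions on Δ(Θ) (two undominated actions). Then for any prior μ and any Bayes-plausible F, there exists a Bayes-plausible F' supported on at most two points with E_{F'}[V] ≥ E_F[V] and ∫c(x,μ)dF'(x) ≤ ∫c(x,μ)dF(x); consequently every optimizer of max{E_F[V] : D(F) ≤ η} can be taken to be supported on at most two posteriors. -/

import Mathlib

open MeasureTheory Set Pointwise

def BayesPlausible {Θ : Type*} [Fintype Θ] (μ : Θ → ℝ) (F : Measure (Θ → ℝ)) : Prop :=
  IsProbabilityMeasure F ∧ (∀ᵐ x ∂F, x ∈ stdSimplex ℝ Θ) ∧ (∫ x, x ∂F) = μ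

/-- `F` is supported on at most two posteriors in the simplex. -/
def TwoPoint {Θ : Type*} [Fintype Θ] (F : Measure (Θ → ℝ)) : Prop :=
  ∃ x₁ ∈ stdSimplex ℝ Θ, ∃ x₂ ∈ stdSimplex ℝ Θ, ∃ p ∈ Icc (0:ℝ) 1,
    F = ENNReal.ofReal p • Measure.dirac x₁ + ENNReal.ofReal (1 - p) • Measure.dirac x₂

section Subgrad
variable {Θ : Type*} [Fintype Θ]

/-- Subgradient of a convex function on the simplex at `b`, valid on the face of
points vanishing wherever `b` does. -/
lemma exists_subgradient (g : (Θ → ℝ) → ℝ) (hg : ConvexOn ℝ (stdSimplex ℝ Θ) g)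
    (b : Θ → ℝ) (hb : b ∈ stdSimplex ℝ Θ) :
    ∃ L : (Θ → ℝ) →ₗ[ℝ] ℝ,
      ∀ x ∈ stdSimplex ℝ Θ, (∀ i, b i = 0 → x i = 0) → g b + L (x - b) ≤ g x := by
  classical
  set sZ : Set (Θ → ℝ) := {x | x ∈ stdSimplex ℝ Θ ∧ ∀ i, b i = 0 → x i = 0} with hsZ
  have hbZ : b ∈ sZ := ⟨hb, fun i h => h⟩
  have hsZconv : Convex ℝ sZ := by
    intro x hx y hy a a' ha ha' haa
    refine ⟨convex_stdSimplex ℝ Θ hx.1 hy.1 ha ha' haa, fun i h => ?_⟩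
    simp [hx.2 i h, hy.2 i h]
  -- the set of points with nonzero coordinate
  set Tf : Finset Θ := Finset.univ.filter (fun i => b i ≠ 0) with hTf
  have hTfne : Tf.Nonempty := by
    obtain ⟨i, hi⟩ := Finset.exists_ne_zero_of_sum_ne_zero (by rw [hb.2]; norm_num :
      ∑ i, b i ≠ 0)
    exact ⟨i, by simp [hTf, hi]⟩
  set ε : ℝ := Tf.inf' hTfne b with hε
  have hεpos : 0 < ε := by
    obtain ⟨i, hi, hie⟩ := Finset.exists_mem_eq_inf' hTfne b
    have : b i ≠ 0 := by simpa [hTf] using hi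
    rw [hε, hie]
    exact lt_of_le_of_ne (hb.1 i) (Ne.symm this)
  have hεle : ∀ i, b i ≠ 0 → ε ≤ b i := fun i hi =>
    Finset.inf'_le b (by simp [hTf, hi])
  -- membership in the face: downward closed in t
  have adm_mono : ∀ (w : Θ → ℝ) (t t' : ℝ), 0 < t' → t' ≤ t → 0 < t →
      b + t • w ∈ sZ → b + t' • w ∈ sZ := by
    intro w t t' ht' htt' ht h
    have key : b + t' • w = (1 - t'/t) • b + (t'/t) • (b + t • w) := by
      funext i
      have : t ≠ 0 := ne_of_gt ht
      simp only [Pi.add_apply, Pi.smul_apply, smul_eq_mul]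
      field_simp
      ring
    have hle1 : t'/t ≤ 1 := (div_le_one ht).mpr htt'
    rw [key]
    exact hsZconv hbZ h (by linarith) (by positivity) (by ring)
  -- admissible membership in W gives existence of admissible t
  have adm_exists : ∀ w : Θ → ℝ, (∀ i, b i = 0 → w i = 0) → (∑ i, w i = 0) →
      ∃ t : ℝ, 0 < t ∧ b + t • w ∈ sZ := by
    intro w hw hsum
    refine ⟨ε / (‖w‖ + 1), by positivity, ?_, ?_⟩
    · constructor
      · intro i
        by_cases hbi : b i = 0
        · simp [hbi, hw i hbi]
        · have h1 : |w i| ≤ ‖w‖ := by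
            simpa [Real.norm_eq_abs] using norm_le_pi_norm w i
          have h2 : ε ≤ b i := hεle i hbi
          have hn : (0:ℝ) ≤ ‖w‖ := norm_nonneg w
          have : ε / (‖w‖ + 1) * |w i| ≤ ε := by
            rw [div_mul_eq_mul_div, div_le_iff₀ (by positivity)]
            nlinarith [abs_nonneg (w i)]
          have hc : (0:ℝ) ≤ ε / (‖w‖ + 1) := by positivity
          have h3 : ε / (‖w‖ + 1) * (-|w i|) ≤ ε / (‖w‖ + 1) * w i :=
            mul_le_mul_of_nonneg_left (neg_abs_le (w i)) hc
          simp only [Pi.add_apply, Pi.smul_apply, smul_eq_mul]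
          nlinarith [abs_nonneg (w i)]
      · simp only [Pi.add_apply, Pi.smul_apply, smul_eq_mul]
        rw [Finset.sum_add_distrib, hb.2, ← Finset.mul_sum, hsum]
        ring
    · intro i hbi
      simp [hbi, hw i hbi]

  -- slope sets and the sublinear functional
  set S : (Θ → ℝ) → Set ℝ := fun w =>
    {r | ∃ t : ℝ, 0 < t ∧ b + t • w ∈ sZ ∧ r = (g (b + t • w) - g b) / t} with hS
  set q : (Θ → ℝ) → ℝ := fun w => sInf (S w) with hq
  set Wp : (Θ → ℝ) → Prop := fun w => (∀ i, b i = 0 → w i = 0) ∧ ∑ i, w i = 0 with hWp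
  have sZ_sub : sZ ⊆ stdSimplex ℝ Θ := fun x hx => hx.1
  have hSne : ∀ w, Wp w → (S w).Nonempty := by
    intro w hw
    obtain ⟨t, ht, hmem⟩ := adm_exists w hw.1 hw.2
    exact ⟨_, t, ht, hmem, rfl⟩
  have Wneg : ∀ w, Wp w → Wp (-w) := by
    intro w hw
    refine ⟨fun i h => by simp [hw.1 i h], by simp [hw.2]⟩
  have hLB : ∀ w, Wp w → ∀ t' : ℝ, 0 < t' → b + t' • (-w) ∈ sZ →
      ∀ r ∈ S w, (g b - g (b + t' • (-w))) / t' ≤ r := by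
    intro w hw t' ht' hmem' r hr
    obtain ⟨t, ht, hmem, hrt⟩ := hr
    have htt' : (0:ℝ) < t + t' := by positivity
    have hcvx := hg.2 (sZ_sub hmem) (sZ_sub hmem')
      (show (0:ℝ) ≤ t' / (t + t') by positivity)
      (show (0:ℝ) ≤ t / (t + t') by positivity)
      (show t' / (t + t') + t / (t + t') = 1 by field_simp; ring)
    have hbeq : (t' / (t + t')) • (b + t • w) + (t / (t + t')) • (b + t' • (-w)) = b := by
      funext i
      simp only [Pi.add_apply, Pi.smul_apply, Pi.neg_apply, smul_eq_mul]
      have : t + t' ≠ 0 := by positivity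
      field_simp
      ring
    rw [hbeq] at hcvx
    simp only [smul_eq_mul] at hcvx
    have hcvx' : (t + t') * g b ≤ t' * g (b + t • w) + t * g (b + t' • -w) := by
      have h := mul_le_mul_of_nonneg_left hcvx htt'.le
      have e : (t + t') * (t' / (t + t') * g (b + t • w) + t / (t + t') * g (b + t' • -w))
          = t' * g (b + t • w) + t * g (b + t' • -w) := by
        field_simp
      rw [e] at h
      exact h
    rw [hrt, div_le_div_iff₀ ht' ht]
    nlinarith [hcvx']
  have hBdd : ∀ w, Wp w → BddBelow (S w) := by
    intro w hw
    obtain ⟨t', ht', hmem'⟩ := adm_exists (-w) (Wneg w hw).1 (Wneg w hw).2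
    exact ⟨_, fun r hr => hLB w hw t' ht' hmem' r hr⟩
  have q_le : ∀ w, Wp w → ∀ t : ℝ, 0 < t → b + t • w ∈ sZ →
      q w ≤ (g (b + t • w) - g b) / t := by
    intro w hw t ht hmem
    exact csInf_le (hBdd w hw) ⟨t, ht, hmem, rfl⟩
  have slope_mono : ∀ (w : Θ → ℝ) (t₁ t₂ : ℝ), 0 < t₁ → t₁ ≤ t₂ →
      b + t₂ • w ∈ sZ →
      (g (b + t₁ • w) - g b) / t₁ ≤ (g (b + t₂ • w) - g b) / t₂ := by
    intro w t₁ t₂ ht₁ h12 hmem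
    have ht₂ : 0 < t₂ := lt_of_lt_of_le ht₁ h12
    have hkey : b + t₁ • w = (t₁ / t₂) • (b + t₂ • w) + (1 - t₁ / t₂) • b := by
      funext i
      simp only [Pi.add_apply, Pi.smul_apply, smul_eq_mul]
      field_simp
      ring
    have hle1 : t₁ / t₂ ≤ 1 := (div_le_one ht₂).mpr h12
    have hcvx := hg.2 (sZ_sub hmem) (sZ_sub hbZ)
      (show (0:ℝ) ≤ t₁ / t₂ by positivity)
      (show (0:ℝ) ≤ 1 - t₁ / t₂ by linarith)
      (show t₁ / t₂ + (1 - t₁ / t₂) = 1 by ring)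
    rw [← hkey] at hcvx
    simp only [smul_eq_mul] at hcvx
    have hcvx' : t₂ * g (b + t₁ • w) ≤ t₁ * g (b + t₂ • w) + (t₂ - t₁) * g b := by
      have h := mul_le_mul_of_nonneg_left hcvx ht₂.le
      have e : t₂ * (t₁ / t₂ * g (b + t₂ • w) + (1 - t₁ / t₂) * g b)
          = t₁ * g (b + t₂ • w) + (t₂ - t₁) * g b := by
        field_simp
      rw [e] at h
      exact h
    rw [div_le_div_iff₀ ht₁ ht₂]
    nlinarith [hcvx']
  have q_subadd : ∀ w v, Wp w → Wp v → q (w + v) ≤ q w + q v := by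
    intro w v hw hv
    have hwv : Wp (w + v) := by
      refine ⟨fun i h => by simp [hw.1 i h, hv.1 i h], ?_⟩
      simp only [Pi.add_apply]
      rw [Finset.sum_add_distrib, hw.2, hv.2, add_zero]
    refine le_of_forall_pos_le_add ?_
    intro ε hε
    have h1 : q w < q w + ε / 2 := by linarith
    have h2 : q v < q v + ε / 2 := by linarith
    obtain ⟨r₁, hr₁S, hr₁⟩ := exists_lt_of_csInf_lt (hSne w hw) h1
    obtain ⟨r₂, hr₂S, hr₂⟩ := exists_lt_of_csInf_lt (hSne v hv) h2
    obtain ⟨t₁, ht₁, hmem₁, hrt₁⟩ := hr₁S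
    obtain ⟨t₂, ht₂, hmem₂, hrt₂⟩ := hr₂S
    set t : ℝ := min t₁ t₂ / 2 with htdef
    have ht : 0 < t := by positivity
    have h2t₁ : 2 * t ≤ t₁ := by
      have := min_le_left t₁ t₂; rw [htdef]; linarith
    have h2t₂ : 2 * t ≤ t₂ := by
      have := min_le_right t₁ t₂; rw [htdef]; linarith
    have hmw : b + (2 * t) • w ∈ sZ := adm_mono w t₁ (2 * t) (by linarith) h2t₁ ht₁ hmem₁
    have hmv : b + (2 * t) • v ∈ sZ := adm_mono v t₂ (2 * t) (by linarith) h2t₂ ht₂ hmem₂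
    have hmid : b + t • (w + v) = (1/2 : ℝ) • (b + (2*t) • w) + (1/2 : ℝ) • (b + (2*t) • v) := by
      funext i
      simp only [Pi.add_apply, Pi.smul_apply, smul_eq_mul]
      ring
    have hmemwv : b + t • (w + v) ∈ sZ := by
      rw [hmid]
      exact hsZconv hmw hmv (by norm_num) (by norm_num) (by norm_num)
    have step1 : q (w + v) ≤ (g (b + t • (w + v)) - g b) / t := q_le _ hwv t ht hmemwv
    have hcvx := hg.2 (sZ_sub hmw) (sZ_sub hmv)
      (show (0:ℝ) ≤ 1/2 by norm_num) (show (0:ℝ) ≤ 1/2 by norm_num)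
      (show (1/2 : ℝ) + 1/2 = 1 by norm_num)
    rw [← hmid] at hcvx
    have step2 : (g (b + t • (w + v)) - g b) / t ≤
        (g (b + (2*t) • w) - g b) / (2*t) + (g (b + (2*t) • v) - g b) / (2*t) := by
      simp only [smul_eq_mul] at hcvx
      rw [← add_div, div_le_div_iff₀ ht (by linarith : (0:ℝ) < 2*t)]
      nlinarith [mul_le_mul_of_nonneg_right hcvx ht.le]
    have step3 : (g (b + (2*t) • w) - g b) / (2*t) ≤ r₁ := by
      rw [hrt₁]
      exact slope_mono w (2*t) t₁ (by linarith) h2t₁ hmem₁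
    have step4 : (g (b + (2*t) • v) - g b) / (2*t) ≤ r₂ := by
      rw [hrt₂]
      exact slope_mono v (2*t) t₂ (by linarith) h2t₂ hmem₂
    linarith
  have q_homog : ∀ w, Wp w → ∀ a : ℝ, 0 < a → q (a • w) = a * q w := by
    intro w hw a ha
    have hset : S (a • w) = a • (S w) := by
      ext r
      constructor
      · rintro ⟨t, ht, hmem, hrt⟩
        refine ⟨(g (b + (t * a) • w) - g b) / (t * a), ⟨t * a, by positivity, ?_, rfl⟩, ?_⟩
        · have : b + (t * a) • w = b + t • (a • w) := by
            funext i; simp only [Pi.add_apply, Pi.smul_apply, smul_eq_mul]; ring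
          rw [this]; exact hmem
        · have hteq : b + t • (a • w) = b + (t * a) • w := by
            funext i; simp only [Pi.add_apply, Pi.smul_apply, smul_eq_mul]; ring
          rw [hrt, hteq]
          simp only [smul_eq_mul]
          field_simp
      · rintro ⟨r', ⟨t, ht, hmem, hrt⟩, hr⟩
        refine ⟨t / a, by positivity, ?_, ?_⟩
        · have : b + (t / a) • (a • w) = b + t • w := by
            funext i; simp only [Pi.add_apply, Pi.smul_apply, smul_eq_mul]
            field_simp
          rw [this]; exact hmem
        · have hteq : b + (t / a) • (a • w) = b + t • w := by
            funext i; simp only [Pi.add_apply, Pi.smul_apply, smul_eq_mul]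
            field_simp
          rw [← hr, hrt, hteq]
          simp only [smul_eq_mul]
          field_simp
    rw [hq]
    simp only
    rw [hset, Real.sInf_smul_of_nonneg (le_of_lt ha)]
    simp [smul_eq_mul]
  have q_zero : q 0 = 0 := by
    have hsz : S 0 = {(0:ℝ)} := by
      ext r
      simp only [hS, mem_setOf_eq, mem_singleton_iff]
      constructor
      · rintro ⟨t, ht, hmem, hrt⟩
        rw [hrt]
        simp
      · rintro rfl
        exact ⟨1, one_pos, by simpa using hbZ, by simp⟩
    rw [hq]; simp only; rw [hsz, csInf_singleton]
  -- the projection onto the direction space of the face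
  have hnrpos : 0 < (Tf.card : ℝ) := by
    exact_mod_cast Finset.card_pos.mpr hTfne
  have hnr0 : (Tf.card : ℝ) ≠ 0 := ne_of_gt hnrpos
  set π : (Θ → ℝ) → (Θ → ℝ) :=
    fun d i => if b i = 0 then 0 else d i - (∑ j ∈ Tf, d j) / (Tf.card : ℝ) with hπ
  have sum_eq : ∀ d : Θ → ℝ, ∑ i, (if b i = 0 then 0 else d i) = ∑ j ∈ Tf, d j := by
    intro d
    rw [hTf, Finset.sum_filter]
    apply Finset.sum_congr rfl
    intro i _
    by_cases h : b i = 0 <;> simp [h]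
  have πW : ∀ d, Wp (π d) := by
    intro d
    constructor
    · intro i h; simp [hπ, h]
    · have : ∑ i, π d i = ∑ i, (if b i = 0 then 0 else (d i - (∑ j ∈ Tf, d j) / (Tf.card : ℝ))) := by
        apply Finset.sum_congr rfl; intro i _; rw [hπ]
      rw [this, sum_eq, Finset.sum_sub_distrib, Finset.sum_const, nsmul_eq_mul]
      rw [mul_div_cancel₀ _ hnr0, sub_self]
  have π_self : ∀ d, Wp d → π d = d := by
    intro d hd
    funext i
    rw [hπ]
    by_cases h : b i = 0
    · simp [h, hd.1 i h]
    · have hsum : ∑ j ∈ Tf, d j = ∑ j, d j := by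
        apply Finset.sum_subset (Finset.subset_univ Tf)
        intro i _ hi
        have : b i = 0 := by
          by_contra hne
          exact hi (by simp [hTf, hne])
        exact hd.1 i this
      simp [h, hsum, hd.2]
  have π_add : ∀ d e, π (d + e) = π d + π e := by
    intro d e
    funext i
    rw [hπ]
    simp only [Pi.add_apply]
    by_cases h : b i = 0
    · simp [h]
    · simp only [h, if_false]
      rw [Finset.sum_add_distrib, add_div]
      ring
  have π_smul : ∀ (a : ℝ) d, π (a • d) = a • π d := by
    intro a d
    funext i
    rw [hπ]
    simp only [Pi.smul_apply, smul_eq_mul]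
    by_cases h : b i = 0
    · simp [h]
    · simp only [h, if_false]
      rw [← Finset.mul_sum, mul_div_assoc]
      ring
  -- Hahn-Banach extension
  set N : (Θ → ℝ) → ℝ := fun d => q (π d) with hN
  have π_zero : π 0 = 0 := by
    have := π_smul 0 0
    simpa using this
  have N_hom : ∀ a : ℝ, 0 < a → ∀ x, N (a • x) = a * N x := by
    intro a ha x
    rw [hN]
    simp only
    rw [π_smul, q_homog (π x) (πW x) a ha]
  have N_add : ∀ x y, N (x + y) ≤ N x + N y := by
    intro x y
    rw [hN]
    simp only
    rw [π_add]
    exact q_subadd _ _ (πW x) (πW y)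
  obtain ⟨L, _, hL⟩ := exists_extension_of_le_sublinear
    ((0 : (Θ → ℝ) →ₗ[ℝ] ℝ).toPMap ⊥) N N_hom N_add
    (by
      rintro ⟨x, hx⟩
      have hx0 : x = 0 := by simpa using hx
      subst hx0
      simp only [LinearMap.toPMap_apply, LinearMap.zero_apply]
      rw [hN]; simp only; rw [π_zero, q_zero]; simp)
  refine ⟨L, ?_⟩
  intro x hx hxz
  have hdW : Wp (x - b) := by
    constructor
    · intro i h
      simp [hxz i h, h]
    · simp only [Pi.sub_apply]
      rw [Finset.sum_sub_distrib, hx.2, hb.2, sub_self]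
  have hxsZ : x ∈ sZ := ⟨hx, hxz⟩
  have h1 : L (x - b) ≤ N (x - b) := hL _
  have h2 : N (x - b) = q (x - b) := by rw [hN]; simp only; rw [π_self _ hdW]
  have h3 : q (x - b) ≤ (g (b + (1:ℝ) • (x - b)) - g b) / 1 := by
    apply q_le _ hdW 1 one_pos
    have : b + (1:ℝ) • (x - b) = x := by
      funext i; simp
    rw [this]; exact hxsZ
  have hxx : b + (1:ℝ) • (x - b) = x := by funext i; simp
  rw [hxx] at h3
  simp only [div_one] at h3
  linarith



lemma integrable_of_ae_simplex {G : Type*} [NormedAddCommGroup G]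
    (f : (Θ → ℝ) → G) (hf : Continuous f) (C : ℝ) (hC : ∀ x ∈ stdSimplex ℝ Θ, ‖f x‖ ≤ C)
    (ν : Measure (Θ → ℝ)) [IsFiniteMeasure ν]
    (hs : ∀ᵐ x ∂ν, x ∈ stdSimplex ℝ Θ) : Integrable f ν := by
  refine Integrable.mono' (integrable_const C) hf.aestronglyMeasurable ?_
  filter_upwards [hs] with x hx
  exact hC x hx

lemma integrable_id_of_ae_simplex (ν : Measure (Θ → ℝ)) [IsFiniteMeasure ν]
    (hs : ∀ᵐ x ∂ν, x ∈ stdSimplex ℝ Θ) : Integrable (fun x : Θ → ℝ => x) ν := by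
  refine integrable_of_ae_simplex _ continuous_id 1 ?_ ν hs
  intro x hx
  rw [pi_norm_le_iff_of_nonneg zero_le_one]
  intro i
  rw [Real.norm_eq_abs, abs_le]
  refine ⟨by linarith [hx.1 i], ?_⟩
  calc x i ≤ ∑ j, x j := Finset.single_le_sum (fun j _ => hx.1 j) (Finset.mem_univ i)
    _ = 1 := hx.2

/-- Jensen's inequality on the standard simplex, without continuity assumptions. -/
lemma jensen_stdSimplex (g : (Θ → ℝ) → ℝ) (hg : ConvexOn ℝ (stdSimplex ℝ Θ) g)
    (ν : Measure (Θ → ℝ)) [IsProbabilityMeasure ν]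
    (hs : ∀ᵐ x ∂ν, x ∈ stdSimplex ℝ Θ) (hgi : Integrable g ν) :
    (∫ x, x ∂ν) ∈ stdSimplex ℝ Θ ∧ g (∫ x, x ∂ν) ≤ ∫ x, g x ∂ν := by
  have hid : Integrable (fun x : Θ → ℝ => x) ν := integrable_id_of_ae_simplex ν hs
  set b : Θ → ℝ := ∫ x, x ∂ν with hbdef
  have hb : b ∈ stdSimplex ℝ Θ :=
    (convex_stdSimplex ℝ Θ).integral_mem (isClosed_stdSimplex ℝ Θ) hs hid
  refine ⟨hb, ?_⟩
  have hcoord : ∀ i, b i = ∫ x, x i ∂ν := by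
    intro i
    have := (ContinuousLinearMap.proj (R := ℝ) (φ := fun _ : Θ => ℝ) i).integral_comp_comm hid
    simpa using this.symm
  have haez : ∀ᵐ x ∂ν, ∀ i, b i = 0 → x i = 0 := by
    rw [ae_all_iff]
    intro i
    by_cases hbi : b i = 0
    · have hnn : 0 ≤ᵐ[ν] fun x : Θ → ℝ => x i := hs.mono fun x hx => hx.1 i
      have hint : Integrable (fun x : Θ → ℝ => x i) ν := by
        have := (ContinuousLinearMap.proj (R := ℝ) (φ := fun _ : Θ => ℝ) i).integrable_comp hid
        simpa using this
      have hz : ∫ x, x i ∂ν = 0 := by rw [← hcoord]; exact hbi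
      have h0 := (integral_eq_zero_iff_of_nonneg_ae hnn hint).mp hz
      filter_upwards [h0] with x hx _
      exact hx
    · filter_upwards with x h
      exact absurd h hbi
  obtain ⟨L, hL⟩ := exists_subgradient g hg b hb
  set Lc : (Θ → ℝ) →L[ℝ] ℝ := LinearMap.toContinuousLinearMap L with hLc
  have hLint : Integrable (fun x : Θ → ℝ => L x) ν := by
    have := Lc.integrable_comp hid
    simpa [hLc] using this
  have hlow : Integrable (fun x : Θ → ℝ => g b - L b + L x) ν :=
    (integrable_const _).add hLint
  have hmono : ∀ᵐ x ∂ν, g b - L b + L x ≤ g x := by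
    filter_upwards [hs, haez] with x h1 h2
    have := hL x h1 h2
    rw [map_sub] at this
    linarith
  have hint_eq : ∫ x, (g b - L b + L x) ∂ν = g b := by
    rw [integral_add (integrable_const _) hLint, integral_const, probReal_univ,
      one_smul]
    have := Lc.integral_comp_comm hid
    have h2 : ∫ x, L x ∂ν = L b := by simpa [hLc, hbdef] using this
    rw [h2]
    ring
  calc g b = ∫ x, (g b - L b + L x) ∂ν := hint_eq.symm
    _ ≤ ∫ x, g x ∂ν := integral_mono_ae hlow hgi hmono

lemma integrable_dirac' {G : Type*} [NormedAddCommGroup G]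
    (f : (Θ → ℝ) → G) (z : Θ → ℝ) : Integrable f (Measure.dirac z) := by
  have hae : f =ᵐ[Measure.dirac z] fun _ => f z := by
    rw [MeasureTheory.ae_dirac_eq]
    exact Filter.eventually_pure.mpr rfl
  exact (integrable_const (f z)).congr hae.symm

lemma integral_dirac'' {G : Type*} [NormedAddCommGroup G] [NormedSpace ℝ G] [CompleteSpace G]
    (f : (Θ → ℝ) → G) (z : Θ → ℝ) : ∫ x, f x ∂(Measure.dirac z) = f z := by
  have hae : f =ᵐ[Measure.dirac z] fun _ => f z := by
    rw [MeasureTheory.ae_dirac_eq]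
    exact Filter.eventually_pure.mpr rfl
  rw [integral_congr_ae hae, integral_const, probReal_univ, one_smul]

lemma integrable_two_point {G : Type*} [NormedAddCommGroup G]
    (f : (Θ → ℝ) → G) (a b : Θ → ℝ) (p q : ℝ) :
    Integrable f (ENNReal.ofReal p • Measure.dirac a + ENNReal.ofReal q • Measure.dirac b) := by
  rw [integrable_add_measure]
  exact ⟨(integrable_dirac' f a).smul_measure ENNReal.ofReal_ne_top,
    (integrable_dirac' f b).smul_measure ENNReal.ofReal_ne_top⟩

lemma integral_two_point {G : Type*} [NormedAddCommGroup G] [NormedSpace ℝ G] [CompleteSpace G]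
    (f : (Θ → ℝ) → G) (a b : Θ → ℝ) (p q : ℝ) (hp : 0 ≤ p) (hq : 0 ≤ q) :
    ∫ x, f x ∂(ENNReal.ofReal p • Measure.dirac a + ENNReal.ofReal q • Measure.dirac b)
      = p • f a + q • f b := by
  rw [integral_add_measure ((integrable_dirac' f a).smul_measure ENNReal.ofReal_ne_top)
    ((integrable_dirac' f b).smul_measure ENNReal.ofReal_ne_top),
    integral_smul_measure, integral_smul_measure, integral_dirac'', integral_dirac'',
    ENNReal.toReal_ofReal hp, ENNReal.toReal_ofReal hq]

/-- Conditional barycenter representation of one region. -/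
lemma region_repr (F : Measure (Θ → ℝ)) [IsProbabilityMeasure F]
    (hs : ∀ᵐ x ∂F, x ∈ stdSimplex ℝ Θ) {A : Set (Θ → ℝ)} (hA : MeasurableSet A)
    (g : (Θ → ℝ) → ℝ) (hg : ConvexOn ℝ (stdSimplex ℝ Θ) g)
    (hgi : Integrable g F) (μ0 : Θ → ℝ) (hμ0 : μ0 ∈ stdSimplex ℝ Θ) :
    ∃ x ∈ stdSimplex ℝ Θ,
      (F A).toReal • x = ∫ y in A, y ∂F ∧
      (F A).toReal * g x ≤ ∫ y in A, g y ∂F ∧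
      ∀ ℓ : (Θ → ℝ) →ᵃ[ℝ] ℝ, (F A).toReal * ℓ x = ∫ y in A, ℓ y ∂F := by
  have hid : Integrable (fun x : Θ → ℝ => x) F := integrable_id_of_ae_simplex F hs
  by_cases h0 : F A = 0
  · refine ⟨μ0, hμ0, ?_, ?_, ?_⟩ <;>
      simp [Measure.restrict_eq_zero.mpr h0, h0]
  · have hfin : F A ≠ ⊤ := (measure_lt_top F A).ne
    set r : ℝ := (F A).toReal with hrdef
    have hr : 0 < r := ENNReal.toReal_pos h0 hfin
    set ν : Measure (Θ → ℝ) := (F A)⁻¹ • F.restrict A with hν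
    haveI : IsProbabilityMeasure ν := by
      constructor
      rw [hν, Measure.smul_apply, Measure.restrict_apply_univ, smul_eq_mul,
        ENNReal.inv_mul_cancel h0 hfin]
    have hsν : ∀ᵐ x ∂ν, x ∈ stdSimplex ℝ Θ := by
      rw [hν]
      exact Measure.ae_smul_measure (ae_restrict_of_ae hs) _
    have hgν : Integrable g ν := by
      rw [hν]
      exact (hgi.restrict).smul_measure (ENNReal.inv_ne_top.mpr h0)
    have hidν : Integrable (fun x : Θ → ℝ => x) ν := integrable_id_of_ae_simplex ν hsν
    obtain ⟨hmem, hjen⟩ := jensen_stdSimplex g hg ν hsν hgν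
    have hsmulV : ∫ x, (x : Θ → ℝ) ∂ν = r⁻¹ • ∫ x in A, x ∂F := by
      rw [hν, integral_smul_measure, ENNReal.toReal_inv, hrdef]
    have hsmulg : ∫ x, g x ∂ν = r⁻¹ • ∫ x in A, g x ∂F := by
      rw [hν, integral_smul_measure, ENNReal.toReal_inv, hrdef]
    refine ⟨∫ x, x ∂ν, hmem, ?_, ?_, ?_⟩
    · rw [hsmulV, smul_smul, mul_inv_cancel₀ (ne_of_gt hr), one_smul]
    · have := hjen
      rw [hsmulg] at this
      have h2 := mul_le_mul_of_nonneg_left this (le_of_lt hr)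
      calc r * g (∫ x, x ∂ν) ≤ r * (r⁻¹ • ∫ x in A, g x ∂F) := h2
        _ = ∫ x in A, g x ∂F := by
            rw [smul_eq_mul, ← mul_assoc, mul_inv_cancel₀ (ne_of_gt hr), one_mul]
    · intro ℓ
      have hdec : ∀ y, ℓ y = ℓ.linear y + ℓ 0 := fun y => congrFun ℓ.decomp y
      set Lc : (Θ → ℝ) →L[ℝ] ℝ := LinearMap.toContinuousLinearMap ℓ.linear with hLc
      have hlin_int : Integrable (fun y : Θ → ℝ => ℓ.linear y) (F.restrict A) := by
        have := Lc.integrable_comp (hid.restrict (s := A))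
        simpa [hLc] using this
      have hsplit : ∫ y in A, ℓ y ∂F = (∫ y in A, ℓ.linear y ∂F) + r * ℓ 0 := by
        calc ∫ y in A, ℓ y ∂F = ∫ y in A, (ℓ.linear y + ℓ 0) ∂F := by
              apply integral_congr_ae
              filter_upwards with y
              exact hdec y
          _ = (∫ y in A, ℓ.linear y ∂F) + (F A).toReal • ℓ 0 := by
              rw [integral_add hlin_int (integrable_const _), setIntegral_const, measureReal_def]
          _ = (∫ y in A, ℓ.linear y ∂F) + r * ℓ 0 := by rw [hrdef, smul_eq_mul]
      have hlin : ∫ y in A, ℓ.linear y ∂F = ℓ.linear (∫ y in A, y ∂F) := by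
        have := Lc.integral_comp_comm (hid.restrict (s := A))
        simpa [hLc] using this
      have hmean : r • (∫ x, x ∂ν) = ∫ y in A, y ∂F := by
        rw [hsmulV, smul_smul, mul_inv_cancel₀ (ne_of_gt hr), one_smul]
      rw [hsplit, hlin, ← hmean, LinearMap.map_smul, smul_eq_mul, hdec (∫ x, x ∂ν)]
      ring

end Subgrad

/-- With two undominated actions, `V = max(ℓ₁, ℓ₂)` for distinct affine `ℓ₁, ℓ₂`, and for
any Bayes-plausible `F` there is a Bayes-plausible `F'` supported on at most two
posteriors with a weakly higher value and weakly lower expected divergence; consequently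
any optimizer of `max {E_F[V] : D(F) ≤ η}` can be taken supported on two posteriors. -/
theorem stmt8 {Θ : Type*} [Fintype Θ]
    (ℓ₁ ℓ₂ : (Θ → ℝ) →ᵃ[ℝ] ℝ) (hℓ : ℓ₁ ≠ ℓ₂)
    (V : (Θ → ℝ) → ℝ) (hV : ∀ x, V x = max (ℓ₁ x) (ℓ₂ x))
    (μ : Θ → ℝ) (hμ : μ ∈ stdSimplex ℝ Θ)
    (c : (Θ → ℝ) → (Θ → ℝ) → ℝ) (φ : ℝ → ℝ) (hφmono : StrictMono φ) (hφ0 : φ 0 = 0)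
    (hc : StrictConvexOn ℝ (stdSimplex ℝ Θ) (fun x => c x μ)) (hc0 : c μ μ = 0) :
    (∀ F : Measure (Θ → ℝ), BayesPlausible μ F → Integrable V F →
      Integrable (fun x => c x μ) F →
      ∃ F' : Measure (Θ → ℝ), BayesPlausible μ F' ∧ TwoPoint F' ∧
        (∫ x, V x ∂F) ≤ (∫ x, V x ∂F') ∧
        (∫ x, c x μ ∂F') ≤ ∫ x, c x μ ∂F) ∧
    ∀ η : ℝ, ∀ F : Measure (Θ → ℝ), BayesPlausible μ F → Integrable V F →
      Integrable (fun x => c x μ) F → φ (∫ x, c x μ ∂F) ≤ η →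
      (∀ G, BayesPlausible μ G → Integrable V G → Integrable (fun x => c x μ) G →
        φ (∫ x, c x μ ∂G) ≤ η → (∫ x, V x ∂G) ≤ ∫ x, V x ∂F) →
      ∃ F' : Measure (Θ → ℝ), BayesPlausible μ F' ∧ TwoPoint F' ∧
        φ (∫ x, c x μ ∂F') ≤ η ∧ (∫ x, V x ∂F') = ∫ x, V x ∂F := by
  have hmain : ∀ F : Measure (Θ → ℝ), BayesPlausible μ F → Integrable V F →
      Integrable (fun x => c x μ) F →
      ∃ F' : Measure (Θ → ℝ), BayesPlausible μ F' ∧ TwoPoint F' ∧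
        (∫ x, V x ∂F) ≤ (∫ x, V x ∂F') ∧
        (∫ x, c x μ ∂F') ≤ ∫ x, c x μ ∂F := by
    intro F hBP hVF hcF
    obtain ⟨hprob, hs, hmean⟩ := hBP
    haveI := hprob
    have hid : Integrable (fun x : Θ → ℝ => x) F := integrable_id_of_ae_simplex F hs
    have hℓ₁c : Continuous ℓ₁ := ℓ₁.continuous_of_finiteDimensional
    have hℓ₂c : Continuous ℓ₂ := ℓ₂.continuous_of_finiteDimensional
    set A : Set (Θ → ℝ) := {x | ℓ₂ x ≤ ℓ₁ x} with hAdef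
    have hAcl : IsClosed A := isClosed_le hℓ₂c hℓ₁c
    have hA : MeasurableSet A := hAcl.measurableSet
    obtain ⟨x₁, hx₁s, hx₁mean, hx₁cost, hx₁aff⟩ :=
      region_repr F hs hA (fun x => c x μ) hc.convexOn hcF μ hμ
    obtain ⟨x₂, hx₂s, hx₂mean, hx₂cost, hx₂aff⟩ :=
      region_repr F hs hA.compl (fun x => c x μ) hc.convexOn hcF μ hμ
    set p : ℝ := (F A).toReal with hpdef
    set p' : ℝ := (F Aᶜ).toReal with hp'def
    have hfinA : F A ≠ ⊤ := (measure_lt_top F A).ne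
    have hfinAc : F Aᶜ ≠ ⊤ := (measure_lt_top F Aᶜ).ne
    have hsum : p + p' = 1 := by
      rw [hpdef, hp'def, ← ENNReal.toReal_add hfinA hfinAc,
        measure_add_measure_compl hA, measure_univ, ENNReal.toReal_one]
    have hp0 : 0 ≤ p := ENNReal.toReal_nonneg
    have hp'0 : 0 ≤ p' := ENNReal.toReal_nonneg
    have hp1 : p ≤ 1 := by linarith
    have hp'eq : 1 - p = p' := by linarith
    set F' : Measure (Θ → ℝ) :=
      ENNReal.ofReal p • Measure.dirac x₁ + ENNReal.ofReal (1 - p) • Measure.dirac x₂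
      with hF'def
    have hsimplexMeas : MeasurableSet (stdSimplex ℝ Θ) := (isClosed_stdSimplex ℝ Θ).measurableSet
    have hF'prob : IsProbabilityMeasure F' := by
      constructor
      rw [hF'def]
      simp only [Measure.add_apply, Measure.smul_apply, measure_univ, smul_eq_mul, mul_one]
      rw [← ENNReal.ofReal_add hp0 (by linarith), show p + (1 - p) = 1 by ring,
        ENNReal.ofReal_one]
    have hF'ae : ∀ᵐ x ∂F', x ∈ stdSimplex ℝ Θ := by
      rw [ae_iff, hF'def]
      simp only [Measure.add_apply, Measure.smul_apply, smul_eq_mul]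
      rw [show {a : Θ → ℝ | ¬ a ∈ stdSimplex ℝ Θ} = (stdSimplex ℝ Θ)ᶜ from rfl]
      rw [Measure.dirac_apply' _ hsimplexMeas.compl, Measure.dirac_apply' _ hsimplexMeas.compl]
      rw [Set.indicator_of_notMem (by simpa using hx₁s),
        Set.indicator_of_notMem (by simpa using hx₂s)]
      simp
    have hF'mean : (∫ x, x ∂F') = μ := by
      rw [hF'def, integral_two_point _ _ _ _ _ hp0 (by linarith), hp'eq]
      rw [hx₁mean, hx₂mean, integral_add_compl hA hid]
      exact hmean
    have hVmax₁ : ℓ₁ x₁ ≤ V x₁ := by rw [hV]; exact le_max_left _ _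
    have hVmax₂ : ℓ₂ x₂ ≤ V x₂ := by rw [hV]; exact le_max_right _ _
    have hVA : ∫ x in A, V x ∂F = ∫ x in A, ℓ₁ x ∂F := by
      apply setIntegral_congr_fun hA
      intro x hx
      rw [hV]
      exact max_eq_left hx
    have hVAc : ∫ x in Aᶜ, V x ∂F = ∫ x in Aᶜ, ℓ₂ x ∂F := by
      apply setIntegral_congr_fun hA.compl
      intro x hx
      rw [hV]
      exact max_eq_right (le_of_not_ge hx)
    have hVF' : ∫ x, V x ∂F' = p * V x₁ + (1 - p) * V x₂ := by
      rw [hF'def, integral_two_point _ _ _ _ _ hp0 (by linarith), smul_eq_mul, smul_eq_mul]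
    have hVval : (∫ x, V x ∂F) ≤ ∫ x, V x ∂F' := by
      have h1 : ∫ x, V x ∂F = p * ℓ₁ x₁ + p' * ℓ₂ x₂ := by
        rw [← integral_add_compl hA hVF, hVA, hVAc, ← hx₁aff ℓ₁, ← hx₂aff ℓ₂]
      rw [h1, hVF', hp'eq]
      have := mul_le_mul_of_nonneg_left hVmax₁ hp0
      have := mul_le_mul_of_nonneg_left hVmax₂ hp'0
      linarith
    have hcF' : (∫ x, c x μ ∂F') ≤ ∫ x, c x μ ∂F := by
      have h1 : ∫ x, c x μ ∂F' = p * c x₁ μ + (1 - p) * c x₂ μ := by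
        rw [hF'def, integral_two_point _ _ _ _ _ hp0 (by linarith), smul_eq_mul, smul_eq_mul]
      rw [h1, ← integral_add_compl hA hcF, hp'eq]
      exact add_le_add hx₁cost hx₂cost
    exact ⟨F', ⟨hF'prob, hF'ae, hF'mean⟩,
      ⟨x₁, hx₁s, x₂, hx₂s, p, ⟨hp0, hp1⟩, hF'def⟩, hVval, hcF'⟩
  refine ⟨hmain, ?_⟩
  intro η F hBP hVF hcF hfeas hopt
  obtain ⟨F', hBP', hTP', hVle, hcle⟩ := hmain F hBP hVF hcF
  obtain ⟨x₁, hx₁, x₂, hx₂, p, hp, hF'⟩ := hTP'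
  have hVF'i : Integrable V F' := by rw [hF']; exact integrable_two_point _ _ _ _ _
  have hcF'i : Integrable (fun x => c x μ) F' := by
    rw [hF']; exact integrable_two_point _ _ _ _ _
  have hfeas' : φ (∫ x, c x μ ∂F') ≤ η := le_trans (hφmono.monotone hcle) hfeas
  have hVge := hopt F' hBP' hVF'i hcF'i hfeas'
  exact ⟨F', hBP', ⟨x₁, hx₁, x₂, hx₂, p, hp, hF'⟩, hfeas', le_antisymm hVge hVle⟩
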